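/- arXiv:2207.00697 — 3 statements merged into one kernel-verified Lean document; each statement's English description precedes it below -/
import Mathlib

section
/- Let R_self > |R_m| ≥ 0, let Z̄₀ = [[1, R̄_m],[R̄_m, 1]] with R̄_m = R_m/R_self, and a(ψ) = (1, e^{−iψ})ᵀ. Then the two entries of the vector Z̄₀^{−1/2}·a(ψ) have equal absolute value, where Z̄₀^{−1/2} denotes the inverse of the positive-definite square root of Z̄₀. -/
/-!
Since `S` is symmetric, the diagonal entries of `S * S` differ by `S₀₀² - S₁₁²`; as both are
positive, `S = [[α, β], [β, α]]`, and the adjugate formula shows that `S⁻¹` has the same shape.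
For such a real matrix the entries of `S⁻¹ a` are `α + β e` and `β + α e` with `|e| = 1`,
and `β + α e = e · conj (α + β e)`.
-/

open Matrix Complex ComplexConjugate

theorem Matrix.PosDef.exists_eq_of_fin_two_mul_self_diag_eq {S : Matrix (Fin 2) (Fin 2) ℝ}
    (hS : S.PosDef) (h : (S * S) 0 0 = (S * S) 1 1) : ∃ α β : ℝ, S = !![α, β; β, α] := by
  have hsymm : S 1 0 = S 0 1 := hS.isHermitian.apply 0 1
  have h00 : 0 < S 0 0 := hS.diag_pos
  have h11 : 0 < S 1 1 := hS.diag_pos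
  simp only [mul_apply, Fin.sum_univ_two] at h
  have hdiag : S 1 1 = S 0 0 := by nlinarith
  exact ⟨S 0 0, S 0 1, by ext i j; fin_cases i <;> fin_cases j <;> simp [hsymm, hdiag]⟩

theorem Matrix.exists_inv_fin_two_eq {R : Type*} [CommRing R] (α β : R) :
    ∃ α' β' : R, (!![α, β; β, α])⁻¹ = !![α', β'; β', α'] :=
  ⟨Ring.inverse (α * α - β * β) * α, -(Ring.inverse (α * α - β * β) * β), by
    rw [inv_def, adjugate_fin_two_of, det_fin_two_of, smul_of, smul_vec2, smul_vec2]
    simp⟩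

theorem Complex.norm_ofReal_add_mul_comm (p q : ℝ) {e : ℂ} (he : ‖e‖ = 1) :
    ‖(p : ℂ) + q * e‖ = ‖(q : ℂ) + p * e‖ := by
  have hunit : e * starRingEnd ℂ e = 1 := by
    rw [mul_conj, normSq_eq_norm_sq, he]; simp
  have : (q : ℂ) + p * e = e * starRingEnd ℂ ((p : ℂ) + q * e) := by
    simp only [map_add, map_mul, conj_ofReal]
    linear_combination -(q : ℂ) * hunit
  rw [this, norm_mul, he, norm_conj, one_mul]

theorem Matrix.norm_map_ofReal_mulVec_fin_two_eq (α β : ℝ) {e : ℂ} (he : ‖e‖ = 1) :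
    ‖((!![α, β; β, α]).map ofReal *ᵥ ![1, e]) 0‖ =
      ‖((!![α, β; β, α]).map ofReal *ᵥ ![1, e]) 1‖ := by
  simpa [mulVec, dotProduct, Fin.sum_univ_two] using norm_ofReal_add_mul_comm α β he

theorem stmt_3_general (ψ : ℝ)
    (Rmbar : ℝ)
    (S : Matrix (Fin 2) (Fin 2) ℝ) (hS : S.PosDef)
    (hSsq : S * S = !![1, Rmbar; Rmbar, 1])
    (a : Fin 2 → ℂ) (ha : a = ![1, Complex.exp (-(ψ : ℂ) * Complex.I)]) :
    ‖((S⁻¹.map (Complex.ofReal)) *ᵥ a) 0‖ =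
      ‖((S⁻¹.map (Complex.ofReal)) *ᵥ a) 1‖ := by
  obtain ⟨α, β, rfl⟩ := hS.exists_eq_of_fin_two_mul_self_diag_eq (by simp [hSsq])
  obtain ⟨α', β', hinv⟩ := exists_inv_fin_two_eq α β
  have he : ‖exp (-(ψ : ℂ) * I)‖ = 1 := by
    simpa using norm_exp_ofReal_mul_I (-ψ)
  rw [ha, hinv]
  exact norm_map_ofReal_mulVec_fin_two_eq α' β' he

/-- Proposition 1 (qualitative part): the entries of Z̄₀^{−1/2}·a(ψ) have equal magnitude. -/
theorem stmt_3 (Rself Rm : ℝ) (h : |Rm| < Rself) (ψ : ℝ)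
    (Rmbar : ℝ) (hRmbar : Rmbar = Rm / Rself)
    (S : Matrix (Fin 2) (Fin 2) ℝ) (hS : S.PosDef)
    (hSsq : S * S = !![1, Rmbar; Rmbar, 1])
    (a : Fin 2 → ℂ) (ha : a = ![1, Complex.exp (-(ψ : ℂ) * Complex.I)]) :
    ‖((S⁻¹.map (Complex.ofReal)) *ᵥ a) 0‖ =
      ‖((S⁻¹.map (Complex.ofReal)) *ᵥ a) 1‖ :=
  stmt_3_general ψ Rmbar S hS hSsq a ha
end

section
/- Let R_self > |R_m| ≥ 0, R̄_m = R_m/R_self, and ψ ∈ ℝ. The common magnitude of the entries of Z̄₀^{−1/2}(1, e^{−iψ})ᵀ, where Z̄₀ = [[1, R̄_m],[R̄_m, 1]], equals (1/√(2 + 2√(1 − R̄_m²)))·√((1/√(1−R̄_m²) + 1)² + R̄_m²/(1−R̄_m²) − 2(1/√(1−R̄_m²)+1)·(R̄_m/√(1−R̄_m²))·cos ψ). -/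
open Matrix Complex

/-!
A positive-definite square root `S` of `!![1, r; r, 1]` is symmetric with equal diagonal entries,
`S = !![A, B; B, A]` with `A ^ 2 + B ^ 2 = 1` and `2 * A * B = r`; its determinant `A ^ 2 - B ^ 2` is
positive and squares to `1 - r ^ 2`. So both entries of `S⁻¹ (1, e^{-iψ})` have squared modulus
`(1 - r cos ψ) / (1 - r ^ 2)`, and the paper's closed form is the square root of the same quantity.
-/

lemma norm_ofReal_add_ofReal_mul_exp_neg_mul_I (u v ψ : ℝ) :
    ‖(u : ℂ) + v * exp (-ψ * I)‖ = √(u ^ 2 + v ^ 2 + 2 * u * v * Real.cos ψ) := by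
  have hexp : exp (-ψ * I) = Real.cos ψ - Real.sin ψ * I := by
    rw [exp_mul_I, cos_neg, sin_neg, ← ofReal_cos, ← ofReal_sin]; ring
  rw [hexp, norm_def, normSq_apply]
  congr 1
  simp only [add_re, add_im, mul_re, mul_im, sub_re, sub_im, ofReal_re, ofReal_im, I_re, I_im]
  linear_combination v ^ 2 * Real.sin_sq_add_cos_sq ψ

lemma exists_eq_of_posDef_of_mul_self_eq {S : Matrix (Fin 2) (Fin 2) ℝ} {r : ℝ} (hS : S.PosDef)
    (hSsq : S * S = !![1, r; r, 1]) :
    ∃ A B : ℝ, S = !![A, B; B, A] ∧ A ^ 2 + B ^ 2 = 1 ∧ 2 * A * B = r := by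
  have hsym : S 1 0 = S 0 1 := by simpa using hS.1.apply 0 1
  have entry (i k : Fin 2) := congrFun (congrFun hSsq i) k
  simp only [mul_apply, Fin.sum_univ_two] at entry
  have e00 := entry 0 0
  have e01 := entry 0 1
  have e11 := entry 1 1
  simp only [hsym, of_apply, cons_val', cons_val_zero, cons_val_one, empty_val', cons_val_fin_one]
    at e00 e01 e11
  have hdiag : S 1 1 = S 0 0 := by nlinarith [hS.diag_pos (i := 0), hS.diag_pos (i := 1)]
  refine ⟨S 0 0, S 0 1, ?_, by linear_combination e00,
    by linear_combination e01 - S 0 1 * hdiag⟩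
  ext i k; fin_cases i <;> fin_cases k <;> simp [hsym, hdiag]

lemma inv_of_symm_fin_two (A B : ℝ) :
    (!![A, B; B, A])⁻¹ = (A ^ 2 - B ^ 2)⁻¹ • !![A, -B; -B, A] := by
  rw [Matrix.inv_def, adjugate_fin_two_of, det_fin_two_of, Ring.inverse_eq_inv']
  congr 2; ring

lemma norm_inv_symm_fin_two_mulVec_apply (A B ψ : ℝ) (j : Fin 2) :
    ‖((!![A, B; B, A]⁻¹.map ofReal) *ᵥ ![1, exp (-ψ * I)]) j‖ =
      √((A ^ 2 + B ^ 2 - 2 * A * B * Real.cos ψ) / (A ^ 2 - B ^ 2) ^ 2) := by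
  set c := (A ^ 2 - B ^ 2)⁻¹
  have hentries : ((!![A, B; B, A]⁻¹.map ofReal) *ᵥ ![1, exp (-ψ * I)]) =
      ![(↑(c * A) : ℂ) + ↑(-(c * B)) * exp (-ψ * I),
        ↑(-(c * B)) + ↑(c * A) * exp (-ψ * I)] := by
    rw [inv_of_symm_fin_two]
    ext j; fin_cases j <;> simp [mulVec, dotProduct, Fin.sum_univ_two, c]
  rw [hentries]
  fin_cases j <;>
  · simp only [Fin.zero_eta, Fin.mk_one, cons_val_zero, cons_val_one, cons_val_fin_one,
      norm_ofReal_add_ofReal_mul_exp_neg_mul_I]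
    congr 1
    simp only [c, div_eq_mul_inv, ← inv_pow]
    ring

lemma closed_form_eq_sqrt {r : ℝ} (hr : 0 < 1 - r ^ 2) (ψ : ℝ) :
    1 / √(2 + 2 * √(1 - r ^ 2)) *
        √((1 / √(1 - r ^ 2) + 1) ^ 2 + r ^ 2 / (1 - r ^ 2)
          - 2 * (1 / √(1 - r ^ 2) + 1) * (r / √(1 - r ^ 2)) * Real.cos ψ) =
      √((1 - r * Real.cos ψ) / (1 - r ^ 2)) := by
  set d := √(1 - r ^ 2)
  have hd : 0 < d := Real.sqrt_pos.2 hr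
  have hdsq : d ^ 2 = 1 - r ^ 2 := Real.sq_sqrt hr.le
  have h2d : 0 < 2 + 2 * d := by positivity
  have hradicand : (1 / d + 1) ^ 2 + r ^ 2 / (1 - r ^ 2) - 2 * (1 / d + 1) * (r / d) * Real.cos ψ
      = (2 + 2 * d) * ((1 - r * Real.cos ψ) / (1 - r ^ 2)) := by
    rw [← hdsq]; field_simp; linear_combination hdsq
  rw [hradicand, Real.sqrt_mul h2d.le, one_div, inv_mul_cancel_left₀ (Real.sqrt_pos.2 h2d).ne']

theorem stmt_4_general (ψ : ℝ)
    (Rmbar : ℝ)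
    (S : Matrix (Fin 2) (Fin 2) ℝ) (hS : S.PosDef)
    (hSsq : S * S = !![1, Rmbar; Rmbar, 1])
    (a : Fin 2 → ℂ) (ha : a = ![1, Complex.exp (-(ψ : ℂ) * Complex.I)]) :
    ∀ j : Fin 2,
      ‖((S⁻¹.map (Complex.ofReal)) *ᵥ a) j‖ =
        (1 / Real.sqrt (2 + 2 * Real.sqrt (1 - Rmbar ^ 2))) *
          Real.sqrt ((1 / Real.sqrt (1 - Rmbar ^ 2) + 1) ^ 2
            + Rmbar ^ 2 / (1 - Rmbar ^ 2)
            - 2 * (1 / Real.sqrt (1 - Rmbar ^ 2) + 1)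
              * (Rmbar / Real.sqrt (1 - Rmbar ^ 2)) * Real.cos ψ) := by
  intro j
  subst ha
  obtain ⟨A, B, rfl, hsum, rfl⟩ := exists_eq_of_posDef_of_mul_self_eq hS hSsq
  have hdet : 0 < A ^ 2 - B ^ 2 := by simpa [det_fin_two_of, sq] using hS.det_pos
  have hdet_sq : (A ^ 2 - B ^ 2) ^ 2 = 1 - (2 * A * B) ^ 2 := by
    linear_combination (A ^ 2 + B ^ 2 + 1) * hsum
  rw [norm_inv_symm_fin_two_mulVec_apply, closed_form_eq_sqrt (hdet_sq ▸ by positivity), hdet_sq,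
    hsum]

/-- Proposition 1 (closed form): the common magnitude of the entries of Z̄₀^{−1/2}·a(ψ). -/
theorem stmt_4 (Rself Rm : ℝ) (h : |Rm| < Rself) (ψ : ℝ)
    (Rmbar : ℝ) (hRmbar : Rmbar = Rm / Rself)
    (S : Matrix (Fin 2) (Fin 2) ℝ) (hS : S.PosDef)
    (hSsq : S * S = !![1, Rmbar; Rmbar, 1])
    (a : Fin 2 → ℂ) (ha : a = ![1, Complex.exp (-(ψ : ℂ) * Complex.I)]) :
    ∀ j : Fin 2,
      ‖((S⁻¹.map (Complex.ofReal)) *ᵥ a) j‖ =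
        (1 / Real.sqrt (2 + 2 * Real.sqrt (1 - Rmbar ^ 2))) *
          Real.sqrt ((1 / Real.sqrt (1 - Rmbar ^ 2) + 1) ^ 2
            + Rmbar ^ 2 / (1 - Rmbar ^ 2)
            - 2 * (1 / Real.sqrt (1 - Rmbar ^ 2) + 1)
              * (Rmbar / Real.sqrt (1 - Rmbar ^ 2)) * Real.cos ψ) :=
  stmt_4_general ψ Rmbar S hS hSsq a ha
end

section
/- Let Z ∈ ℂ^{N×N} have positive-definite real part Re{Z}, let R_s > 0, and define the 2N×2N matrix Z_M with blocks Z_{M11} = −i·Im(Z_s)·I_N, Z_{M12} = Z_{M21} = −i·√R_s·Re{Z}^{1/2}, Z_{M22} = −i·Im{Z}, where Z_s ∈ ℂ with Re(Z_s) = R_s. Then the transmit impedance matrix Z_T = Z_{M11} − Z_{M12}(Z + Z_{M22})⁻¹ Z_{M21} equals conj(Z_s)·I_N. -/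
open Matrix Complex

/-- Optimality of the multiport matching network: Z_T = conj(Z_s)·I. -/
theorem stmt_7 {N : ℕ} (Z : Matrix (Fin N) (Fin N) ℂ)
    (ReZ ImZ : Matrix (Fin N) (Fin N) ℝ)
    (hReZ : ReZ = Z.map Complex.re) (hImZ : ImZ = Z.map Complex.im)
    (hposdef : ReZ.PosDef)
    (S : Matrix (Fin N) (Fin N) ℝ) (hS : S.PosDef) (hSsq : S * S = ReZ)
    (Zs : ℂ) (Rs : ℝ) (hRs : 0 < Rs) (hZs : Zs.re = Rs)
    (ZM11 ZM12 ZM21 ZM22 : Matrix (Fin N) (Fin N) ℂ)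
    (h11 : ZM11 = (-Complex.I * (Zs.im : ℂ)) • (1 : Matrix (Fin N) (Fin N) ℂ))
    (h12 : ZM12 = (-Complex.I * (Real.sqrt Rs : ℂ)) • (S.map Complex.ofReal))
    (h21 : ZM21 = (-Complex.I * (Real.sqrt Rs : ℂ)) • (S.map Complex.ofReal))
    (h22 : ZM22 = (-Complex.I) • (ImZ.map Complex.ofReal)) :
    ZM11 - ZM12 * (Z + ZM22)⁻¹ * ZM21 = (starRingEnd ℂ Zs) • (1 : Matrix (Fin N) (Fin N) ℂ) := by
  have hSc : Matrix (Fin N) (Fin N) ℂ := S.map Complex.ofReal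
  set Sc : Matrix (Fin N) (Fin N) ℂ := S.map Complex.ofReal with hScdef
  -- Z + ZM22 = Sc * Sc
  have hsum : Z + ZM22 = Sc * Sc := by
    have : Z + ZM22 = ReZ.map Complex.ofReal := by
      subst h22 hImZ hReZ
      ext i j
      simp [Matrix.add_apply, Matrix.smul_apply, Matrix.map_apply, Complex.ext_iff]
    rw [this, ← hSsq]
    ext i j
    simp [Sc, Matrix.mul_apply, Matrix.map_apply]
  have hScunit : IsUnit Sc := by
    have : IsUnit S := (Matrix.isUnit_iff_isUnit_det S).2 hS.det_pos.ne'.isUnit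
    have := (Matrix.isUnit_iff_isUnit_det S).1 this
    refine (Matrix.isUnit_iff_isUnit_det Sc).2 ?_
    have hdet : Sc.det = (S.det : ℂ) := by
      simpa using (RingHom.map_det (algebraMap ℝ ℂ) S).symm
    rw [hdet]
    exact (isUnit_map_iff (algebraMap ℝ ℂ) _).2 this
  have hinv : (Z + ZM22)⁻¹ = Sc⁻¹ * Sc⁻¹ := by
    rw [hsum, Matrix.mul_inv_rev]
  have hmid : Sc * (Sc⁻¹ * Sc⁻¹) * Sc = 1 := by
    rw [← Matrix.mul_assoc, Matrix.mul_assoc Sc, ← Matrix.mul_assoc Sc Sc⁻¹,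
      Matrix.mul_nonsing_inv _ ((Matrix.isUnit_iff_isUnit_det Sc).1 hScunit),
      Matrix.one_mul, Matrix.nonsing_inv_mul _ ((Matrix.isUnit_iff_isUnit_det Sc).1 hScunit)]
  have hsqrt : ((Real.sqrt Rs : ℂ)) * ((Real.sqrt Rs : ℂ)) = (Rs : ℂ) := by
    rw [← Complex.ofReal_mul, Real.mul_self_sqrt hRs.le]
  subst h11 h12 h21
  rw [hinv]
  simp only [Matrix.smul_mul, Matrix.mul_smul, smul_smul]
  rw [hmid]
  have hscal : (-Complex.I * (Real.sqrt Rs : ℂ)) * (-Complex.I * (Real.sqrt Rs : ℂ)) = -(Rs : ℂ) := by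
    have : (-Complex.I * (Real.sqrt Rs : ℂ)) * (-Complex.I * (Real.sqrt Rs : ℂ))
        = (Complex.I * Complex.I) * ((Real.sqrt Rs : ℂ) * (Real.sqrt Rs : ℂ)) := by ring
    rw [this, Complex.I_mul_I, hsqrt]; ring
  rw [hscal, ← sub_smul]
  congr 1
  have : (starRingEnd ℂ) Zs = (Rs : ℂ) - Complex.I * (Zs.im : ℂ) := by
    rw [Complex.ext_iff]
    simp [hZs]
  rw [this]; ring
end
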